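/- arXiv:1405.1220 — 7 statements merged into one kernel-verified Lean document; each statement's English description precedes it below -/
import Mathlib

section
/- For any list of natural-number codeword lengths there exists a prefix-free binary code with those lengths if and only if the lengths satisfy Kraft's inequality ∑_i 2^{-ℓ_i} ≤ 1. -/
/-!
Necessity is the Kraft–McMillan inequality: a prefix code without the empty word is uniquely
decodable, and a prefix code containing the empty word has only that one codeword.

Sufficiency is the greedy construction: with the lengths sorted increasingly, the `i`-th codeword
is the `ℓ i`-digit binary expansion of `2 ^ ℓ i * ∑ j < i, 2 ^ (-ℓ j)`. The dyadic intervals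
`[∑ j < i, 2 ^ (-ℓ j), ∑ j ≤ i, 2 ^ (-ℓ j))` are pairwise disjoint, so no codeword is a prefix of
another, and Kraft's inequality keeps their left endpoints below `1`, so that each expansion fits
into `ℓ i` digits.
-/

open Finset

namespace InformationTheory

variable {α ι : Type*}

def IsPrefixCode (c : ι → List α) : Prop :=
  ∀ i j, i ≠ j → ¬ c i <+: c j

namespace IsPrefixCode

variable {c : ι → List α}

theorem injective (hc : IsPrefixCode c) : Function.Injective c := fun i j h =>
  by_contra fun hij => hc i j hij (h ▸ List.prefix_refl _)

theorem comp {κ : Type*} (hc : IsPrefixCode c) {f : κ → ι} (hf : Function.Injective f) :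
    IsPrefixCode (c ∘ f) :=
  fun i j hij => hc (f i) (f j) (hf.ne hij)

theorem eq_of_append_eq (hc : IsPrefixCode c) {i j : ι} {s t : List α}
    (h : c i ++ s = c j ++ t) : i = j := by
  by_contra hij
  have hi : c i <+: c j ++ t := h ▸ List.prefix_append _ _
  rcases le_total (c i).length (c j).length with hle | hle
  · exact hc i j hij (List.prefix_of_prefix_length_le hi (List.prefix_append _ _) hle)
  · exact hc j i (Ne.symm hij) (List.prefix_of_prefix_length_le (List.prefix_append _ _) hi hle)

theorem uniquelyDecodable (hc : IsPrefixCode c) (hne : ∀ i, c i ≠ []) :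
    UniquelyDecodable (Set.range c) := by
  intro L₁ L₂ h₁ h₂ h
  induction L₁ generalizing L₂ with
  | nil =>
    cases L₂ with
    | nil => rfl
    | cons w _ =>
      obtain ⟨i, rfl⟩ := h₂ w (by simp)
      simp_all
  | cons w t ih =>
    cases L₂ with
    | nil =>
      obtain ⟨i, rfl⟩ := h₁ w (by simp)
      simp_all
    | cons w' t' =>
      obtain ⟨i, rfl⟩ := h₁ w (by simp)
      obtain ⟨j, rfl⟩ := h₂ w' (by simp)
      rw [List.flatten_cons, List.flatten_cons] at h
      obtain rfl := hc.eq_of_append_eq h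
      rw [ih t' (fun w hw => h₁ w (by simp [hw])) (fun w hw => h₂ w (by simp [hw]))
        (List.append_cancel_left h)]

theorem sum_one_div_card_pow_length_le [Fintype ι] [Fintype α] [Nonempty α]
    (hc : IsPrefixCode c) : ∑ i, (1 / (Fintype.card α : ℝ)) ^ (c i).length ≤ 1 := by
  classical
  by_cases hnil : ∃ i, c i = []
  · obtain ⟨i, hi⟩ := hnil
    have hunique : ∀ j, j = i := fun j =>
      by_contra fun hji => hc i j (Ne.symm hji) (hi ▸ List.nil_prefix)
    rw [Fintype.sum_eq_single i fun j hj => absurd (hunique j) hj, hi]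
    simp
  · push Not at hnil
    have hS : UniquelyDecodable ((univ.image c : Finset (List α)) : Set (List α)) := by
      rw [coe_image, coe_univ, Set.image_univ]
      exact hc.uniquelyDecodable hnil
    simpa only [sum_image fun i _ j _ h => hc.injective h] using kraft_mcmillan_inequality hS

end IsPrefixCode

def binaryWord : ℕ → ℕ → List Bool
  | 0, _ => []
  | l + 1, v => binaryWord l (v / 2) ++ [decide (v % 2 = 1)]

@[simp]
theorem length_binaryWord (l v : ℕ) : (binaryWord l v).length = l := by
  induction l generalizing v <;> simp [binaryWord, *]

theorem binaryWord_add (l k v : ℕ) :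
    binaryWord (l + k) v = binaryWord l (v / 2 ^ k) ++ binaryWord k v := by
  induction k generalizing v with
  | zero => simp [binaryWord]
  | succ k ih =>
    rw [← Nat.add_assoc, binaryWord, ih, binaryWord, List.append_assoc, Nat.div_div_eq_div_mul,
      ← pow_succ']

theorem binaryWord_injOn (l : ℕ) : Set.InjOn (binaryWord l) (Set.Iio (2 ^ l)) := by
  induction l with
  | zero => simp_all
  | succ l ih =>
    intro v hv w hw h
    simp only [Set.mem_Iio, pow_succ] at hv hw
    obtain ⟨hhigh, hlow⟩ := List.append_inj' h rfl
    have : v / 2 = w / 2 := ih (Set.mem_Iio.2 (by omega)) (Set.mem_Iio.2 (by omega)) hhigh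
    simp only [List.cons.injEq, and_true, decide_eq_decide] at hlow
    omega

theorem div_eq_of_binaryWord_prefix {l l' v w : ℕ} (hv : v < 2 ^ l) (hw : w < 2 ^ l')
    (h : binaryWord l v <+: binaryWord l' w) : w / 2 ^ (l' - l) = v := by
  obtain ⟨k, rfl⟩ := Nat.exists_eq_add_of_le (by simpa using h.length_le)
  rw [binaryWord_add] at h
  rw [Nat.add_sub_cancel_left]
  refine binaryWord_injOn l ?_ hv
    ((List.prefix_of_prefix_length_le (List.prefix_append _ _) h (by simp)).eq_of_length (by simp))
  rw [Set.mem_Iio, Nat.div_lt_iff_lt_mul (by positivity), ← pow_add]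
  exact hw

section kraftOffset

variable [LinearOrder ι] [LocallyFiniteOrderBot ι] {ℓ : ι → ℕ}

def kraftOffset (ℓ : ι → ℕ) (i : ι) : ℕ :=
  ∑ j ∈ Iio i, 2 ^ (ℓ i - ℓ j)

theorem kraftOffset_add_one (ℓ : ι → ℕ) (i : ι) :
    kraftOffset ℓ i + 1 = ∑ j ∈ Iic i, 2 ^ (ℓ i - ℓ j) := by
  classical
  rw [← Iio_insert, sum_insert (by simp), Nat.sub_self, pow_zero, add_comm]
  rfl

theorem pow_mul_kraftOffset_add_one_le (hℓ : Monotone ℓ) {i j : ι} (hji : j < i) :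
    2 ^ (ℓ i - ℓ j) * (kraftOffset ℓ j + 1) ≤ kraftOffset ℓ i := by
  rw [kraftOffset_add_one, mul_sum]
  calc ∑ k ∈ Iic j, 2 ^ (ℓ i - ℓ j) * 2 ^ (ℓ j - ℓ k)
      = ∑ k ∈ Iic j, 2 ^ (ℓ i - ℓ k) := sum_congr rfl fun k hk => by
        have hkj := hℓ (mem_Iic.1 hk)
        have hji := hℓ hji.le
        rw [← pow_add]
        congr 1
        omega
    _ ≤ kraftOffset ℓ i :=
        sum_le_sum_of_subset fun k hk => mem_Iio.2 ((mem_Iic.1 hk).trans_lt hji)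

theorem kraftOffset_lt [Fintype ι] (hℓ : Monotone ℓ) (h : ∑ i, ((2 : ℝ) ^ ℓ i)⁻¹ ≤ 1)
    (i : ι) : kraftOffset ℓ i < 2 ^ ℓ i := by
  have key : ((kraftOffset ℓ i + 1 : ℕ) : ℝ) ≤ 2 ^ ℓ i :=
    calc ((kraftOffset ℓ i + 1 : ℕ) : ℝ)
        = ∑ j ∈ Iic i, (2 : ℝ) ^ ℓ i * ((2 : ℝ) ^ ℓ j)⁻¹ := by
          rw [kraftOffset_add_one]
          push_cast
          exact sum_congr rfl fun j hj => pow_sub₀ _ two_ne_zero (hℓ (mem_Iic.1 hj))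
      _ = 2 ^ ℓ i * ∑ j ∈ Iic i, ((2 : ℝ) ^ ℓ j)⁻¹ := (mul_sum _ _ _).symm
      _ ≤ 2 ^ ℓ i * 1 := by
          gcongr
          exact (sum_le_sum_of_subset_of_nonneg (subset_univ _) fun _ _ _ => by positivity).trans h
      _ = 2 ^ ℓ i := mul_one _
  exact_mod_cast key

theorem isPrefixCode_binaryWord_kraftOffset [Fintype ι] (hℓ : Monotone ℓ)
    (h : ∑ i, ((2 : ℝ) ^ ℓ i)⁻¹ ≤ 1) :
    IsPrefixCode fun i => binaryWord (ℓ i) (kraftOffset ℓ i) := by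
  intro i j hij hpre
  have hdiv := div_eq_of_binaryWord_prefix (kraftOffset_lt hℓ h i) (kraftOffset_lt hℓ h j) hpre
  rcases hij.lt_or_gt with hlt | hgt
  · have hgap := pow_mul_kraftOffset_add_one_le hℓ hlt
    have : kraftOffset ℓ i + 1 ≤ kraftOffset ℓ j / 2 ^ (ℓ j - ℓ i) :=
      (Nat.le_div_iff_mul_le (by positivity)).2 (by rw [mul_comm]; exact hgap)
    omega
  · have hgap := pow_mul_kraftOffset_add_one_le hℓ hgt
    rw [Nat.sub_eq_zero_of_le (hℓ hgt.le), pow_zero, Nat.div_one] at hdiv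
    have := Nat.le_mul_of_pos_left (kraftOffset ℓ j + 1) (Nat.two_pow_pos (ℓ i - ℓ j))
    omega

end kraftOffset

theorem exists_isPrefixCode_of_kraft {n : ℕ} (ℓ : Fin n → ℕ) (h : ∑ i, ((2 : ℝ) ^ ℓ i)⁻¹ ≤ 1) :
    ∃ c : Fin n → List Bool, (∀ i, (c i).length = ℓ i) ∧ IsPrefixCode c := by
  set σ := Tuple.sort ℓ
  have hσ : ∑ i, ((2 : ℝ) ^ (ℓ ∘ σ) i)⁻¹ ≤ 1 := by
    rwa [Function.comp_def, Equiv.sum_comp σ fun i => ((2 : ℝ) ^ ℓ i)⁻¹]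
  refine ⟨(fun k => binaryWord ((ℓ ∘ σ) k) (kraftOffset (ℓ ∘ σ) k)) ∘ σ.symm, by simp,
    (isPrefixCode_binaryWord_kraftOffset (Tuple.monotone_sort ℓ) hσ).comp σ.symm.injective⟩

end InformationTheory

/-- Kraft's theorem: a prefix-free binary code with given codeword lengths
exists iff the lengths satisfy Kraft's inequality `∑ 2^{-ℓᵢ} ≤ 1`. -/
theorem prefix_free_code_iff_kraft (L : List ℕ) :
    (∃ c : Fin L.length → List Bool,
        (∀ i, (c i).length = L.get i) ∧
        (∀ i j, i ≠ j → ¬ (c i <+: c j))) ↔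
      (∑ i : Fin L.length, ((2 : ℝ) ^ (L.get i))⁻¹ ≤ 1) := by
  constructor
  · rintro ⟨c, hlen, hc⟩
    simpa [hlen, inv_pow] using
      InformationTheory.IsPrefixCode.sum_one_div_card_pow_length_le (α := Bool) hc
  · exact InformationTheory.exists_isPrefixCode_of_kraft _
end

section
/- In the canonical Huffman code construction, the set of codes produced is prefix-free: if fst[ℓ'] = 2^{ℓ'-ℓ}·(last[ℓ]+1) whenever ℓ' is the next used length after ℓ, and codes of length ℓ are the consecutive integers fst[ℓ],...,last[ℓ] (interpreted as ℓ-bit strings), then no code is a prefix of another. -/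
/-!
The codeword `c` of length `ℓ` stands for the dyadic interval `[c / 2^ℓ, (c + 1) / 2^ℓ)`, and a
prefix of a codeword stands for an interval containing its interval. The canonical construction
makes `fst ℓ / 2^ℓ` the Kraft sum of the lengths below `ℓ`, so the codewords of length `ℓ` tile
the interval between two consecutive partial Kraft sums. Hence intervals of codewords of different
lengths are disjoint, and Kraft's equality keeps them inside `[0, 1)`, i.e. every codeword of
length `ℓ` is below `2^ℓ`, where `toBits ℓ` is injective.
-/

/-- The `ℓ`-bit binary representation of `c`, most significant bit first. -/
def toBits (ℓ c : ℕ) : List Bool :=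
  (List.range ℓ).map (fun i => c.testBit (ℓ - 1 - i))

@[simp]
lemma toBits_length (ℓ c : ℕ) : (toBits ℓ c).length = ℓ := by
  simp [toBits]

lemma toBits_add (a b c : ℕ) : toBits (a + b) c = toBits a (c / 2 ^ b) ++ toBits b c := by
  refine List.ext_getElem (by simp) fun i h _ ↦ ?_
  simp only [toBits_length] at h
  simp only [toBits, List.getElem_append, List.getElem_map, List.getElem_range,
    List.length_map, List.length_range, Nat.testBit_div_two_pow]
  split <;> congr 1 <;> omega

lemma toBits_injOn (ℓ : ℕ) : Set.InjOn (toBits ℓ) (Set.Iio (2 ^ ℓ)) := by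
  intro a ha b hb hab
  refine Nat.eq_of_testBit_eq fun i ↦ ?_
  rcases lt_or_ge i ℓ with hi | hi
  · have := congrArg (fun l ↦ l[ℓ - 1 - i]?) hab
    simpa [toBits, hi, show ℓ - 1 - (ℓ - 1 - i) = i by omega, show ℓ - 1 - i < ℓ by omega]
      using this
  · rw [Nat.testBit_lt_two_pow (ha.trans_le (Nat.pow_le_pow_right two_pos hi)),
      Nat.testBit_lt_two_pow (hb.trans_le (Nat.pow_le_pow_right two_pos hi))]

lemma eq_div_two_pow_of_toBits_prefix {ℓ d a b : ℕ} (ha : a < 2 ^ ℓ) (hb : b < 2 ^ (ℓ + d))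
    (h : toBits ℓ a <+: toBits (ℓ + d) b) : a = b / 2 ^ d := by
  rw [toBits_add] at h
  refine toBits_injOn ℓ ha ?_ ((List.prefix_of_prefix_length_le h (List.prefix_append _ _)
    (by simp)).eq_of_length (by simp))
  rw [Set.mem_Iio, Nat.div_lt_iff_lt_mul (by positivity), ← pow_add]
  exact hb

lemma cast_div_two_pow_add_lt {ℓ d b : ℕ} :
    (b : ℝ) / 2 ^ (ℓ + d) < (b / 2 ^ d + 1 : ℕ) / 2 ^ ℓ := by
  have h : b < 2 ^ d * (b / 2 ^ d + 1) := Nat.lt_mul_div_succ b (by positivity)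
  rw [pow_add, div_lt_div_iff₀ (by positivity) (by positivity), mul_comm (2 ^ ℓ : ℝ),
    ← mul_assoc, mul_comm _ (2 ^ d : ℝ)]
  gcongr
  exact_mod_cast h

lemma Finset.exists_lt_forall_notMem_Ioo {α : Type*} [LinearOrder α] {s : Finset α} {ℓ : α}
    (h : ∃ x ∈ s, x < ℓ) : ∃ m ∈ s, m < ℓ ∧ ∀ k ∈ s, ¬ (m < k ∧ k < ℓ) := by
  obtain ⟨m, hm, hmax⟩ := (s.filter (· < ℓ)).exists_max_image id (by simpa [Finset.Nonempty])
  simp only [Finset.mem_filter, id] at hm hmax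
  exact ⟨m, hm.1, hm.2, fun k hk ⟨hmk, hkℓ⟩ ↦ (hmax k ⟨hk, hkℓ⟩).not_gt hmk⟩

section CanonicalCode

variable {used : Finset ℕ} {nCodes fst last : ℕ → ℕ}

lemma last_add_one (hused : ∀ ℓ, ℓ ∈ used ↔ 0 < nCodes ℓ)
    (hlast : ∀ ℓ, last ℓ = fst ℓ + nCodes ℓ - 1) {ℓ : ℕ} (hℓ : ℓ ∈ used) :
    last ℓ + 1 = fst ℓ + nCodes ℓ := by
  have := (hused ℓ).1 hℓ
  have := hlast ℓ
  omega

lemma fst_div_two_pow_eq_sum (hused : ∀ ℓ, ℓ ∈ used ↔ 0 < nCodes ℓ)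
    (hlast : ∀ ℓ, last ℓ = fst ℓ + nCodes ℓ - 1) (hne : used.Nonempty)
    (hmin : fst (used.min' hne) = 0)
    (hnext : ∀ ℓ ℓ', ℓ ∈ used → ℓ' ∈ used → ℓ < ℓ' →
      (∀ m ∈ used, ¬ (ℓ < m ∧ m < ℓ')) →
      fst ℓ' = 2 ^ (ℓ' - ℓ) * (last ℓ + 1))
    {ℓ : ℕ} (hℓ : ℓ ∈ used) :
    (fst ℓ : ℝ) / 2 ^ ℓ = ∑ k ∈ used with k < ℓ, (nCodes k : ℝ) / 2 ^ k := by
  induction ℓ using Nat.strong_induction_on with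
  | _ ℓ ih =>
  rcases (used.min'_le ℓ hℓ).eq_or_lt with hℓmin | hminℓ
  · have : used.filter (· < ℓ) = ∅ :=
      Finset.filter_eq_empty_iff.2 fun k hk ↦ not_lt.2 (hℓmin ▸ used.min'_le k hk)
    rw [this, ← hℓmin, hmin]
    simp
  obtain ⟨m, hm, hmℓ, hgap⟩ :=
    Finset.exists_lt_forall_notMem_Ioo ⟨_, used.min'_mem hne, hminℓ⟩
  have hfilter : used.filter (· < ℓ) = insert m (used.filter (· < m)) := by
    ext k
    simp only [Finset.mem_filter, Finset.mem_insert]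
    have := hgap k
    constructor
    · rintro ⟨hk, hkℓ⟩
      rcases lt_trichotomy k m with h | rfl | h <;> simp_all
    · rintro (rfl | ⟨hk, hkm⟩) <;> exact ⟨by assumption, by omega⟩
  obtain ⟨d, rfl⟩ := Nat.exists_eq_add_of_lt hmℓ
  rw [hfilter, Finset.sum_insert (by simp), ← ih m (by omega) hm,
    hnext m _ hm hℓ hmℓ hgap, last_add_one hused hlast hm, show m + d + 1 - m = d + 1 by omega]
  push_cast
  field_simp
  ring

lemma last_add_one_div_two_pow_eq_sum (hused : ∀ ℓ, ℓ ∈ used ↔ 0 < nCodes ℓ)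
    (hlast : ∀ ℓ, last ℓ = fst ℓ + nCodes ℓ - 1) (hne : used.Nonempty)
    (hmin : fst (used.min' hne) = 0)
    (hnext : ∀ ℓ ℓ', ℓ ∈ used → ℓ' ∈ used → ℓ < ℓ' →
      (∀ m ∈ used, ¬ (ℓ < m ∧ m < ℓ')) →
      fst ℓ' = 2 ^ (ℓ' - ℓ) * (last ℓ + 1))
    {ℓ : ℕ} (hℓ : ℓ ∈ used) :
    ((last ℓ + 1 : ℕ) : ℝ) / 2 ^ ℓ = ∑ k ∈ used with k ≤ ℓ, (nCodes k : ℝ) / 2 ^ k := by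
  have : used.filter (· ≤ ℓ) = insert ℓ (used.filter (· < ℓ)) := by
    ext k
    simp only [Finset.mem_filter, Finset.mem_insert]
    constructor
    · rintro ⟨hk, hkℓ⟩
      rcases hkℓ.eq_or_lt with rfl | h <;> simp_all
    · rintro (rfl | ⟨hk, hkℓ⟩) <;> exact ⟨by assumption, by omega⟩
  rw [this, Finset.sum_insert (by simp), last_add_one hused hlast hℓ, Nat.cast_add, add_div,
    fst_div_two_pow_eq_sum hused hlast hne hmin hnext hℓ, add_comm]

lemma last_lt_two_pow (hused : ∀ ℓ, ℓ ∈ used ↔ 0 < nCodes ℓ)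
    (hlast : ∀ ℓ, last ℓ = fst ℓ + nCodes ℓ - 1) (hne : used.Nonempty)
    (hmin : fst (used.min' hne) = 0)
    (hnext : ∀ ℓ ℓ', ℓ ∈ used → ℓ' ∈ used → ℓ < ℓ' →
      (∀ m ∈ used, ¬ (ℓ < m ∧ m < ℓ')) →
      fst ℓ' = 2 ^ (ℓ' - ℓ) * (last ℓ + 1))
    (hkraft : ∑ ℓ ∈ used, (nCodes ℓ : ℝ) * ((2 : ℝ) ^ ℓ)⁻¹ = 1)
    {ℓ : ℕ} (hℓ : ℓ ∈ used) : last ℓ < 2 ^ ℓ := by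
  have h : ((last ℓ + 1 : ℕ) : ℝ) / 2 ^ ℓ ≤ 1 := by
    rw [last_add_one_div_two_pow_eq_sum hused hlast hne hmin hnext hℓ, ← hkraft]
    simp only [← div_eq_mul_inv]
    exact Finset.sum_le_sum_of_subset_of_nonneg (Finset.filter_subset _ _)
      fun _ _ _ ↦ by positivity
  rw [div_le_one (by positivity)] at h
  exact_mod_cast h

lemma last_add_one_div_two_pow_le (hused : ∀ ℓ, ℓ ∈ used ↔ 0 < nCodes ℓ)
    (hlast : ∀ ℓ, last ℓ = fst ℓ + nCodes ℓ - 1) (hne : used.Nonempty)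
    (hmin : fst (used.min' hne) = 0)
    (hnext : ∀ ℓ ℓ', ℓ ∈ used → ℓ' ∈ used → ℓ < ℓ' →
      (∀ m ∈ used, ¬ (ℓ < m ∧ m < ℓ')) →
      fst ℓ' = 2 ^ (ℓ' - ℓ) * (last ℓ + 1))
    {ℓ ℓ' : ℕ} (hℓ : ℓ ∈ used) (hℓ' : ℓ' ∈ used) (hlt : ℓ < ℓ') :
    ((last ℓ + 1 : ℕ) : ℝ) / 2 ^ ℓ ≤ fst ℓ' / 2 ^ ℓ' := by
  rw [last_add_one_div_two_pow_eq_sum hused hlast hne hmin hnext hℓ,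
    fst_div_two_pow_eq_sum hused hlast hne hmin hnext hℓ']
  exact Finset.sum_le_sum_of_subset_of_nonneg
    (Finset.monotone_filter_right _ fun _ _ hk ↦ hk.trans_lt hlt)
    fun _ _ _ ↦ by positivity

end CanonicalCode

/-- Canonical Huffman codes are prefix-free: if codes of each used length `ℓ`
are the consecutive integers `fst ℓ, …, last ℓ` (as `ℓ`-bit strings),
`fst` of the minimum used length is `0`, and for consecutive used lengths
`ℓ < ℓ'` we have `fst ℓ' = 2^(ℓ'-ℓ)·(last ℓ + 1)`, then no code is a prefix
of another (distinct) code. -/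
theorem canonical_huffman_prefix_free
    (used : Finset ℕ) (nCodes fst last : ℕ → ℕ)
    (hused : ∀ ℓ, ℓ ∈ used ↔ 0 < nCodes ℓ)
    (hlast : ∀ ℓ, last ℓ = fst ℓ + nCodes ℓ - 1)
    (hne : used.Nonempty)
    (hmin : fst (used.min' hne) = 0)
    (hnext : ∀ ℓ ℓ', ℓ ∈ used → ℓ' ∈ used → ℓ < ℓ' →
      (∀ m ∈ used, ¬ (ℓ < m ∧ m < ℓ')) →
      fst ℓ' = 2 ^ (ℓ' - ℓ) * (last ℓ + 1))
    (hkraft : ∑ ℓ ∈ used, (nCodes ℓ : ℝ) * ((2 : ℝ) ^ ℓ)⁻¹ = 1) :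
    ∀ ℓ₁ ℓ₂ c₁ c₂, ℓ₁ ∈ used → ℓ₂ ∈ used →
      fst ℓ₁ ≤ c₁ → c₁ ≤ last ℓ₁ → fst ℓ₂ ≤ c₂ → c₂ ≤ last ℓ₂ →
      toBits ℓ₁ c₁ <+: toBits ℓ₂ c₂ → ℓ₁ = ℓ₂ ∧ c₁ = c₂ := by
  intro ℓ₁ ℓ₂ c₁ c₂ h₁ h₂ _ hc₁ hfst₂ hc₂ hprefix
  have hbound {ℓ c} (hℓ : ℓ ∈ used) (hc : c ≤ last ℓ) : c < 2 ^ ℓ :=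
    hc.trans_lt (last_lt_two_pow hused hlast hne hmin hnext hkraft hℓ)
  obtain ⟨d, rfl⟩ := Nat.exists_eq_add_of_le (by simpa using hprefix.length_le)
  have hc₁_eq := eq_div_two_pow_of_toBits_prefix (hbound h₁ hc₁) (hbound h₂ hc₂) hprefix
  rcases d.eq_zero_or_pos with rfl | hd
  · simpa using hc₁_eq
  refine absurd ?_ (lt_irrefl ((c₂ : ℝ) / 2 ^ (ℓ₁ + d)))
  calc (c₂ : ℝ) / 2 ^ (ℓ₁ + d) < (c₂ / 2 ^ d + 1 : ℕ) / 2 ^ ℓ₁ := cast_div_two_pow_add_lt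
    _ ≤ (last ℓ₁ + 1 : ℕ) / 2 ^ ℓ₁ := by gcongr; omega
    _ ≤ fst (ℓ₁ + d) / 2 ^ (ℓ₁ + d) :=
      last_add_one_div_two_pow_le hused hlast hne hmin hnext h₁ h₂ (by omega)
    _ ≤ c₂ / 2 ^ (ℓ₁ + d) := by gcongr
end

section
/- The wavelet-matrix level mapping preserves contiguity of node intervals: if all positions of a wavelet-tree node v form a contiguous interval [s,e] in the level-ℓ bitmap B_ℓ, then after mapping each position i with B_ℓ[i]=0 to rank_0(B_ℓ,i) and each position with B_ℓ[i]=1 to z_ℓ + rank_1(B_ℓ,i) (where z_ℓ is the total number of 0s in B_ℓ), the positions of each child of v form a contiguous interval in level ℓ+1. -/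
/-- `rankB B b i` = number of positions `p ∈ [1,i]` with `B p = b`. -/
def rankB (B : ℕ → Bool) (b : Bool) (i : ℕ) : ℕ :=
  ((Finset.Icc 1 i).filter (fun p => B p = b)).card

/-- The wavelet-matrix level mapping: position `i` maps to `rank₀(B,i)` if
`B i = 0`, and to `z + rank₁(B,i)` otherwise, where `z = rank₀(B,n)`. -/
def wmMap (B : ℕ → Bool) (n i : ℕ) : ℕ :=
  if B i = false then rankB B false i else rankB B false n + rankB B true i

/-!
On the positions carrying bit `b`, the map is `i ↦ c + rank_b(B,i)` for a constant offset `c`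
(`0` for `b = 0`, `z` for `b = 1`). Since `rank_b` grows by exactly one at each such position
and stays put elsewhere, the `b`-positions of `[s,e]` are sent bijectively onto
`(rank_b(B,s-1), rank_b(B,e)]`, so the child lands on a translate of that interval.
-/

namespace rankB

variable (B : ℕ → Bool) (b : Bool)

lemma succ (i : ℕ) : rankB B b (i + 1) = rankB B b i + if B (i + 1) = b then 1 else 0 := by
  unfold rankB
  rw [← Finset.insert_Icc_right_eq_Icc_add_one (by omega : 1 ≤ i + 1), Finset.filter_insert]
  split_ifs
  · rw [Finset.card_insert_of_notMem (by simp)]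
  · rfl

lemma monotone : Monotone (rankB B b) := fun _ _ h =>
  Finset.card_le_card <| Finset.filter_subset_filter _ <| Finset.Icc_subset_Icc_right h

variable {B b}

lemma sub_one_add_one_of_eq {i : ℕ} (hi : 1 ≤ i) (hb : B i = b) :
    rankB B b (i - 1) + 1 = rankB B b i := by
  obtain ⟨j, rfl⟩ := Nat.exists_eq_add_of_le' hi
  simp [succ, hb]

lemma eq_sub_one_of_ne {i : ℕ} (hi : 1 ≤ i) (hb : B i ≠ b) : rankB B b i = rankB B b (i - 1) := by
  obtain ⟨j, rfl⟩ := Nat.exists_eq_add_of_le' hi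
  simp [succ, hb]

/-- Discrete intermediate value property: the first position at which `rank_b` reaches `k`
carries bit `b`. -/
lemma exists_eq {s e k : ℕ} (hs : 1 ≤ s) (hk : rankB B b (s - 1) < k) (hke : k ≤ rankB B b e) :
    ∃ i ∈ (Finset.Icc s e).filter (fun i => B i = b), rankB B b i = k := by
  have hex : ∃ i, k ≤ rankB B b i := ⟨e, hke⟩
  set i := Nat.find hex
  have hki : k ≤ rankB B b i := Nat.find_spec hex
  have hie : i ≤ e := Nat.find_min' hex hke
  have hsi : s ≤ i := by
    by_contra! h
    have := monotone B b (by omega : i ≤ s - 1)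
    omega
  have hprev : rankB B b (i - 1) < k := lt_of_not_ge (Nat.find_min hex (by omega))
  have hbi : B i = b := by
    by_contra h
    have := eq_sub_one_of_ne (by omega) h
    omega
  refine ⟨i, Finset.mem_filter.2 ⟨Finset.mem_Icc.2 ⟨hsi, hie⟩, hbi⟩, ?_⟩
  have := sub_one_add_one_of_eq (by omega) hbi
  omega

lemma image_filter_Icc {s e : ℕ} (hs : 1 ≤ s) :
    ((Finset.Icc s e).filter (fun i => B i = b)).image (rankB B b)
      = Finset.Icc (rankB B b (s - 1) + 1) (rankB B b e) := by
  ext k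
  simp only [Finset.mem_image, Finset.mem_Icc]
  constructor
  · rintro ⟨i, hi, rfl⟩
    obtain ⟨⟨hsi, hie⟩, hbi⟩ := by simpa only [Finset.mem_filter, Finset.mem_Icc] using hi
    have := sub_one_add_one_of_eq (by omega) hbi
    have := monotone B b (by omega : s - 1 ≤ i - 1)
    exact ⟨by omega, monotone B b hie⟩
  · rintro ⟨hk, hke⟩
    exact exists_eq hs hk hke

end rankB

lemma wmMap_eq_add_rankB (B : ℕ → Bool) (n i : ℕ) :
    wmMap B n i = (if B i then rankB B false n else 0) + rankB B (B i) i := by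
  cases h : B i <;> simp [wmMap, h]

theorem wmMap_preserves_contiguity_general
    (n : ℕ) (B : ℕ → Bool) (s e : ℕ) (hs : 1 ≤ s) (b : Bool) :
    ∃ s' e', ((Finset.Icc s e).filter (fun i => B i = b)).image (wmMap B n)
      = Finset.Icc s' e' := by
  set c := if b then rankB B false n else 0
  have hmap : ∀ i ∈ (Finset.Icc s e).filter (fun i => B i = b), wmMap B n i = c + rankB B b i :=
    fun i hi => by rw [wmMap_eq_add_rankB, (Finset.mem_filter.1 hi).2]
  refine ⟨c + (rankB B b (s - 1) + 1), c + rankB B b e, ?_⟩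
  rw [Finset.image_congr hmap, ← Finset.image_add_left_Icc, ← rankB.image_filter_Icc hs,
    Finset.image_image]
  rfl

/-- The wavelet-matrix level mapping preserves contiguity: the positions of a
node form an interval `[s,e]`; after mapping, the positions of each child
(those `i ∈ [s,e]` whose bit `B i` equals `b`) form a contiguous interval. -/
theorem wmMap_preserves_contiguity
    (n : ℕ) (B : ℕ → Bool) (s e : ℕ) (hs : 1 ≤ s) (he : e ≤ n) (b : Bool) :
    ∃ s' e', ((Finset.Icc s e).filter (fun i => B i = b)).image (wmMap B n)
      = Finset.Icc s' e' :=
  wmMap_preserves_contiguity_general n B s e hs b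
end

section
/- In a wavelet matrix, given codes c_1 and c_2 (bit sequences) stored at distinct positions, c_1 appears before c_2 in the level-ℓ bitmap if there exists 0 ≤ i < ℓ such that c_1[ℓ-i..ℓ-1] = c_2[ℓ-i..ℓ-1] and c_1[ℓ-i-1] = 0 ≠ c_2[ℓ-i-1]; symmetrically c_1 appears after c_2 if c_1[ℓ-i-1] = 1 ≠ c_2[ℓ-i-1]. -/
/-- Abstract wavelet-matrix order: `wmBefore c1 c2 p1 p2 ℓ` says the element
with code `c1` (bits indexed from 0) and initial position `p1` appears before
the element with code `c2` and initial position `p2` in the level-`ℓ` bitmap.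
At level 0 the order is the input order; the stable mapping to level `ℓ+1`
places all positions with bit `c ℓ = 0` (in order) before those with
`c ℓ = 1` (in order). -/
def wmBefore (c1 c2 : ℕ → Bool) (p1 p2 : ℕ) : ℕ → Prop
  | 0 => p1 < p2
  | (ℓ + 1) => (c1 ℓ = false ∧ c2 ℓ = true) ∨ (c1 ℓ = c2 ℓ ∧ wmBefore c1 c2 p1 p2 ℓ)

theorem wmBefore_of_eq_above {c1 c2 : ℕ → Bool} {p1 p2 k : ℕ} :
    ∀ {ℓ : ℕ}, k < ℓ → c1 k = false → c2 k = true →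
      (∀ j, k < j → j < ℓ → c1 j = c2 j) → wmBefore c1 c2 p1 p2 ℓ
  | 0, hk, _, _, _ => absurd hk (Nat.not_lt_zero k)
  | ℓ + 1, hk, h1, h2, heq => by
    rcases (Nat.lt_succ_iff.mp hk).eq_or_lt with rfl | hkℓ
    · exact Or.inl ⟨h1, h2⟩
    · exact Or.inr ⟨heq ℓ hkℓ ℓ.lt_succ_self,
        wmBefore_of_eq_above hkℓ h1 h2 fun j hkj hjℓ => heq j hkj (hjℓ.trans ℓ.lt_succ_self)⟩

/-- Lemma on the order of codes in a wavelet matrix: if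
`c1[ℓ-i .. ℓ-1] = c2[ℓ-i .. ℓ-1]` and `c1[ℓ-i-1] ≠ c2[ℓ-i-1]` for some
`0 ≤ i < ℓ`, then `c1` appears before `c2` in the level-`ℓ` bitmap when
`c1[ℓ-i-1] = 0`, and after `c2` when `c1[ℓ-i-1] = 1`. -/
theorem wmBefore_of_suffix_eq
    (c1 c2 : ℕ → Bool) (p1 p2 ℓ i : ℕ) (hi : i < ℓ)
    (hsuffix : ∀ j, ℓ - i ≤ j → j ≤ ℓ - 1 → c1 j = c2 j) :
    (c1 (ℓ - i - 1) = false → c2 (ℓ - i - 1) = true → wmBefore c1 c2 p1 p2 ℓ) ∧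
    (c1 (ℓ - i - 1) = true → c2 (ℓ - i - 1) = false → wmBefore c2 c1 p2 p1 ℓ) := by
  have hk : ℓ - i - 1 < ℓ := by omega
  have heq : ∀ j, ℓ - i - 1 < j → j < ℓ → c1 j = c2 j :=
    fun j hkj hjℓ => hsuffix j (by omega) (by omega)
  exact ⟨fun h1 h2 => wmBefore_of_eq_above hk h1 h2 heq,
    fun h1 h2 => wmBefore_of_eq_above hk h2 h1 fun j hkj hjℓ => (heq j hkj hjℓ).symm⟩
end

section
/- Bit-reversed fixed-length codes appear in numeric order in the last level of the wavelet matrix: for any i < j in [0,σ), the code inv(i,⌈lg σ⌉) (the ⌈lg σ⌉-bit representation of i read backwards) occupies positions strictly to the left of the code inv(j,⌈lg σ⌉) in the bitmap at level ⌈lg σ⌉. -/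
/-- `natInv c ℓ` is the number whose `ℓ`-bit binary representation is the
reversal of that of `c`. -/
def natInv (c ℓ : ℕ) : ℕ :=
  ∑ t ∈ Finset.range ℓ, if c.testBit (ℓ - 1 - t) then 2 ^ t else 0

/-- The `⌈lg σ⌉`-bit string of value `v`, MSB first, as a bit sequence. -/
def msbBits (L v : ℕ) : ℕ → Bool := fun t => v.testBit (L - 1 - t)

/-!
Reading `inv(v, L)` most significant bit first yields the bits of `v` from the least significant
one up, so level `t` of the wavelet matrix partitions by bit `t` of the original symbol. The `L`
stable partitions are then an LSD radix sort: at level `L` the order of two codes is the numeric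
order of the symbols modulo `2 ^ L`, and `i < j < σ ≤ 2 ^ ⌈lg σ⌉`.
-/

theorem Nat.testBit_sum_two_pow (s : Finset ℕ) (k : ℕ) :
    (∑ i ∈ s, 2 ^ i).testBit k ↔ k ∈ s := by
  rw [← Nat.mem_bitIndices, ← List.mem_toFinset, Finset.toFinset_bitIndices_sum_two_pow]

theorem Nat.mod_two_pow_succ_eq (x L : ℕ) :
    x % 2 ^ (L + 1) = x % 2 ^ L + 2 ^ L * (x.testBit L).toNat := by
  rw [Nat.mod_pow_succ, Nat.toNat_testBit]

theorem testBit_natInv (c ℓ k : ℕ) :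
    (natInv c ℓ).testBit k = (decide (k < ℓ) && c.testBit (ℓ - 1 - k)) := by
  rw [natInv, ← Finset.sum_filter, Bool.eq_iff_iff, Nat.testBit_sum_two_pow]
  simp

theorem msbBits_natInv {L t : ℕ} (v : ℕ) (ht : t < L) :
    msbBits L (natInv v L) t = v.testBit t := by
  rw [msbBits, testBit_natInv, Nat.sub_sub_self (by omega : t ≤ L - 1)]
  simp [show L - 1 - t < L by omega]

theorem wmBefore_congr {c1 c2 d1 d2 : ℕ → Bool} {p1 p2 L : ℕ}
    (h1 : ∀ t < L, c1 t = d1 t) (h2 : ∀ t < L, c2 t = d2 t) :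
    wmBefore c1 c2 p1 p2 L ↔ wmBefore d1 d2 p1 p2 L := by
  induction L with
  | zero => rfl
  | succ L ih =>
    rw [wmBefore, wmBefore, h1 L L.lt_succ_self, h2 L L.lt_succ_self,
      ih (fun t ht => h1 t (by omega)) (fun t ht => h2 t (by omega))]

theorem wmBefore_testBit_of_mod_lt {i j : ℕ} (p1 p2 : ℕ) {L : ℕ}
    (h : i % 2 ^ L < j % 2 ^ L) : wmBefore i.testBit j.testBit p1 p2 L := by
  induction L with
  | zero => simp [Nat.mod_one] at h
  | succ L ih =>
    rw [Nat.mod_two_pow_succ_eq, Nat.mod_two_pow_succ_eq] at h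
    have hi : i % 2 ^ L < 2 ^ L := Nat.mod_lt _ (Nat.two_pow_pos L)
    have hj : j % 2 ^ L < 2 ^ L := Nat.mod_lt _ (Nat.two_pow_pos L)
    rw [wmBefore]
    cases hbi : i.testBit L <;> cases hbj : j.testBit L <;> rw [hbi, hbj] at h <;>
      simp only [Bool.toNat_false, Bool.toNat_true] at h
    · exact Or.inr ⟨rfl, ih (by omega)⟩
    · exact Or.inl ⟨rfl, rfl⟩
    · omega
    · exact Or.inr ⟨rfl, ih (by omega)⟩

/-- Bit-reversed fixed-length codes appear in numeric order in the last level
of the wavelet matrix: for `i < j < σ`, the code `inv(i,⌈lg σ⌉)` lies strictly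
to the left of the code `inv(j,⌈lg σ⌉)` at level `⌈lg σ⌉`, regardless of the
initial positions. -/
theorem inv_codes_ordered_at_last_level
    (σ i j p1 p2 : ℕ) (hij : i < j) (hj : j < σ) :
    wmBefore (msbBits (Nat.clog 2 σ) (natInv i (Nat.clog 2 σ)))
             (msbBits (Nat.clog 2 σ) (natInv j (Nat.clog 2 σ)))
             p1 p2 (Nat.clog 2 σ) := by
  set L := Nat.clog 2 σ
  have hjL : j < 2 ^ L := hj.trans_le (Nat.le_pow_clog one_lt_two σ)
  have hmod : i % 2 ^ L < j % 2 ^ L := by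
    rwa [Nat.mod_eq_of_lt (hij.trans hjL), Nat.mod_eq_of_lt hjL]
  rw [wmBefore_congr (fun t ht => msbBits_natInv i ht) (fun t ht => msbBits_natInv j ht)]
  exact wmBefore_testBit_of_mod_lt p1 p2 hmod
end

section
/- The code-reassignment algorithm for Huffman-shaped wavelet matrices produces a prefix-free code: starting with candidate set C = {0,1} at level 1 and, at each level ℓ, removing the nCodes[ℓ] codes c from C with minimum inv(c,ℓ) and replacing each remaining code c by c:0 and c:1, the set of all removed (assigned) codes is prefix-free. -/
/-! A code that survives to level `m` is built by extending, at every level `ℓ < m`, a code of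
`C ℓ` that was *not* assigned at level `ℓ`; hence its length-`ℓ` prefix lies in `C ℓ \ A ℓ`.
An assigned code `c₁ ∈ A ℓ₁` that is a proper prefix of an assigned code `c₂ ∈ A ℓ₂` would be
exactly that prefix of `c₂`, so it would lie outside `A ℓ₁`. -/

/-- `invVal c` is the value of the bit string `c` read backwards (first bit
least significant), i.e. `inv(c, |c|)` as a number. -/
def invVal (c : List Bool) : ℕ :=
  c.foldr (fun b acc => (if b then 1 else 0) + 2 * acc) 0

section CodeTree

variable {α : Type*} [DecidableEq α]

theorem take_mem_of_mem_image_append {S : Finset (List α)} {n : ℕ}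
    (hS : ∀ c ∈ S, c.length = n) (s : List α) {c : List α} (hc : c ∈ S.image (· ++ s)) :
    c.take n ∈ S := by
  obtain ⟨c', hc', rfl⟩ := Finset.mem_image.1 hc
  rwa [List.take_left' (hS c' hc')]

variable {C A : ℕ → Finset (List α)}

theorem take_mem_sdiff_of_lt
    (hparent : ∀ ℓ, 1 ≤ ℓ → ∀ c ∈ C (ℓ + 1), c.take ℓ ∈ C ℓ \ A ℓ)
    {ℓ : ℕ} (hℓ : 1 ≤ ℓ) {m : ℕ} (hm : ℓ < m) {c : List α} (hc : c ∈ C m) :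
    c.take ℓ ∈ C ℓ \ A ℓ := by
  induction m, hm using Nat.le_induction generalizing c with
  | base => exact hparent ℓ hℓ c hc
  | succ m hm ih =>
    have hparent_m := hparent m (hℓ.trans (Nat.le_of_succ_le hm)) c hc
    have := ih (Finset.mem_sdiff.1 hparent_m).1
    rwa [List.take_take, min_eq_left (Nat.le_of_succ_le hm)] at this

theorem eq_of_prefix_of_mem_assigned
    (hparent : ∀ ℓ, 1 ≤ ℓ → ∀ c ∈ C (ℓ + 1), c.take ℓ ∈ C ℓ \ A ℓ)
    (hsub : ∀ ℓ, A ℓ ⊆ C ℓ) (hlen : ∀ ℓ, ∀ c ∈ C ℓ, c.length = ℓ)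
    {ℓ₁ ℓ₂ : ℕ} {c₁ c₂ : List α} (h₁ : 1 ≤ ℓ₁) (hc₁ : c₁ ∈ A ℓ₁) (hc₂ : c₂ ∈ A ℓ₂)
    (hpre : c₁ <+: c₂) : c₁ = c₂ := by
  have hl₁ := hlen ℓ₁ c₁ (hsub ℓ₁ hc₁)
  have hl₂ := hlen ℓ₂ c₂ (hsub ℓ₂ hc₂)
  rcases (hl₁ ▸ hl₂ ▸ hpre.length_le).eq_or_lt with heq | hlt
  · exact hpre.eq_of_length (hl₁.trans (heq.trans hl₂.symm))
  · have hprefix : c₂.take ℓ₁ = c₁ := by rw [List.prefix_iff_eq_take.1 hpre, hl₁]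
    have := take_mem_sdiff_of_lt hparent h₁ hlt (hsub ℓ₂ hc₂)
    exact absurd hc₁ (hprefix ▸ (Finset.mem_sdiff.1 this).2)

end CodeTree

theorem code_reassignment_prefix_free_general
    (C A : ℕ → Finset (List Bool))
    (hsub : ∀ ℓ, A ℓ ⊆ C ℓ)
    (hlen : ∀ ℓ c, c ∈ C ℓ → c.length = ℓ)
    (hstep : ∀ ℓ, 1 ≤ ℓ →
      C (ℓ + 1) = ((C ℓ \ A ℓ).image (fun c => c ++ [false])) ∪
                  ((C ℓ \ A ℓ).image (fun c => c ++ [true]))) :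
    ∀ ℓ₁ ℓ₂ c₁ c₂, 1 ≤ ℓ₁ → 1 ≤ ℓ₂ → c₁ ∈ A ℓ₁ → c₂ ∈ A ℓ₂ →
      c₁ <+: c₂ → c₁ = c₂ := by
  have hparent : ∀ ℓ, 1 ≤ ℓ → ∀ c ∈ C (ℓ + 1), c.take ℓ ∈ C ℓ \ A ℓ := by
    intro ℓ hℓ c hc
    have hS : ∀ c ∈ C ℓ \ A ℓ, c.length = ℓ := fun c hc => hlen ℓ c (Finset.mem_sdiff.1 hc).1
    rw [hstep ℓ hℓ, Finset.mem_union] at hc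
    exact hc.elim (take_mem_of_mem_image_append hS _) (take_mem_of_mem_image_append hS _)
  intro ℓ₁ ℓ₂ c₁ c₂ h₁ _ hc₁ hc₂ hpre
  exact eq_of_prefix_of_mem_assigned hparent hsub hlen h₁ hc₁ hc₂ hpre

/-- The code-reassignment algorithm for Huffman-shaped wavelet matrices
produces a prefix-free code: starting with candidate set `C 1 = {0,1}`, at
each level `ℓ` the `nCodes ℓ` codes of minimum `inv` value are removed
(assigned, forming `A ℓ`) and every remaining code `c` is replaced by `c:0`
and `c:1`. Then no assigned code is a proper prefix of another. -/
theorem code_reassignment_prefix_free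
    (nCodes : ℕ → ℕ) (C A : ℕ → Finset (List Bool))
    (hC1 : C 1 = {[false], [true]})
    (hsub : ∀ ℓ, A ℓ ⊆ C ℓ)
    (hcard : ∀ ℓ, 1 ≤ ℓ → (A ℓ).card = nCodes ℓ)
    (hlen : ∀ ℓ c, c ∈ C ℓ → c.length = ℓ)
    (hmininv : ∀ ℓ c c', c ∈ A ℓ → c' ∈ C ℓ → c' ∉ A ℓ → invVal c < invVal c')
    (hstep : ∀ ℓ, 1 ≤ ℓ →
      C (ℓ + 1) = ((C ℓ \ A ℓ).image (fun c => c ++ [false])) ∪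
                  ((C ℓ \ A ℓ).image (fun c => c ++ [true]))) :
    ∀ ℓ₁ ℓ₂ c₁ c₂, 1 ≤ ℓ₁ → 1 ≤ ℓ₂ → c₁ ∈ A ℓ₁ → c₂ ∈ A ℓ₂ →
      c₁ <+: c₂ → c₁ = c₂ :=
  code_reassignment_prefix_free_general C A hsub hlen hstep
end

section
/- The code-reassignment algorithm for Huffman-shaped wavelet matrices performs a total of O(σ) insertions into the candidate set: the total number of codes ever inserted into C during the algorithm is at most 2σ. -/
/-! Every code that is not assigned at level `ℓ` is split into two codes of level `ℓ + 1`,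
so `|C (ℓ+1)| + 2 |A ℓ| = 2 |C ℓ|`. Summing over the levels telescopes to
`∑ |C ℓ| + |C 1| = 2 σ + |C (m+1)|`, that is `∑ |C ℓ| = 2 σ - 2`. -/

theorem Finset.card_image_append_false_union_image_append_true (S : Finset (List Bool)) :
    (S.image (· ++ [false]) ∪ S.image (· ++ [true])).card = 2 * S.card := by
  have hdisj : Disjoint (S.image (· ++ [false])) (S.image (· ++ [true])) := by
    simp only [Finset.disjoint_left, Finset.mem_image, not_exists, not_and]
    rintro _ ⟨x, -, rfl⟩ y - hxy
    simpa using congrArg List.getLast? hxy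
  rw [Finset.card_union_of_disjoint hdisj,
    Finset.card_image_of_injective _ (List.append_left_injective _),
    Finset.card_image_of_injective _ (List.append_left_injective _), two_mul]

theorem Finset.sum_Icc_add_eq_of_succ_add_two_mul {c a : ℕ → ℕ}
    (h : ∀ ℓ, 1 ≤ ℓ → c (ℓ + 1) + 2 * a ℓ = 2 * c ℓ) (n : ℕ) :
    ∑ ℓ ∈ Finset.Icc 1 n, c ℓ + c 1 = 2 * ∑ ℓ ∈ Finset.Icc 1 n, a ℓ + c (n + 1) := by
  induction n with
  | zero => simp
  | succ k ih =>
    rw [Finset.sum_Icc_succ_top (by omega), Finset.sum_Icc_succ_top (by omega)]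
    have := h (k + 1) (by omega)
    omega

theorem code_reassignment_total_insertions_general
    (m : ℕ) (C A : ℕ → Finset (List Bool))
    (hC1 : C 1 = {[false], [true]})
    (hsub : ∀ ℓ, A ℓ ⊆ C ℓ)
    (hstep : ∀ ℓ, 1 ≤ ℓ →
      C (ℓ + 1) = ((C ℓ \ A ℓ).image (fun c => c ++ [false])) ∪
                  ((C ℓ \ A ℓ).image (fun c => c ++ [true])))
    (hend : C (m + 1) = ∅) :
    ∑ ℓ ∈ Finset.Icc 1 m, (C ℓ).card ≤ 2 * ∑ ℓ ∈ Finset.Icc 1 m, (A ℓ).card := by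
  have hlevel : ∀ ℓ, 1 ≤ ℓ → (C (ℓ + 1)).card + 2 * (A ℓ).card = 2 * (C ℓ).card := by
    intro ℓ hℓ
    rw [hstep ℓ hℓ, Finset.card_image_append_false_union_image_append_true,
      ← mul_add, Finset.card_sdiff_add_card_eq_card (hsub ℓ)]
  have htotal := Finset.sum_Icc_add_eq_of_succ_add_two_mul
    (c := fun ℓ => (C ℓ).card) (a := fun ℓ => (A ℓ).card) hlevel m
  have hC1card : (C 1).card = 2 := by rw [hC1]; decide
  rw [hC1card, hend, Finset.card_empty] at htotal
  omega

/-- The code-reassignment algorithm performs `O(σ)` insertions: if the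
candidate set starts as `C 1 = {0,1}`, evolves by removing the assigned codes
`A ℓ ⊆ C ℓ` and appending a 0 and a 1 to each remaining code, and is empty
after level `m`, then the total number of codes ever present in `C` is at
most twice the total number `σ` of assigned codes. -/
theorem code_reassignment_total_insertions
    (m : ℕ) (C A : ℕ → Finset (List Bool))
    (hC1 : C 1 = {[false], [true]})
    (hsub : ∀ ℓ, A ℓ ⊆ C ℓ)
    (hlen : ∀ ℓ c, c ∈ C ℓ → c.length = ℓ)
    (hstep : ∀ ℓ, 1 ≤ ℓ →
      C (ℓ + 1) = ((C ℓ \ A ℓ).image (fun c => c ++ [false])) ∪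
                  ((C ℓ \ A ℓ).image (fun c => c ++ [true])))
    (hend : C (m + 1) = ∅) :
    ∑ ℓ ∈ Finset.Icc 1 m, (C ℓ).card ≤ 2 * ∑ ℓ ∈ Finset.Icc 1 m, (A ℓ).card :=
  code_reassignment_total_insertions_general m C A hC1 hsub hstep hend
end
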